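/- Let R be a subring of the field ℚ̄ of algebraic numbers containing an invertible element α that is not a root of unity. Then for every natural number n ≥ 1 and every nonzero ideal I of R, there exist infinitely many units x of R such that x^n - 1 ∈ I. -/

import Mathlib

/-!
The nonzero elements of `I` are algebraic over `ℤ`, so `I` contains a nonzero integer `N`.
Let `f` be a primitive integer polynomial vanishing at `α`. The ring `ℤ[X]/(f, N)` is finite:
for `N = p` prime it is `𝔽_p[X]/(f mod p)` with `f mod p ≠ 0`, and
`(f, a) * (f, b) ⊆ (f, ab)` makes finiteness multiplicative in `N`. Since `X ↦ α` maps this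
finite ring to `R/I`, the image of `α` in `(R/I)ˣ` has some finite order `d`, and the
pairwise distinct units `α^(dm)` all satisfy `x^n ≡ 1 mod I`.
-/

open Polynomial

theorem AdjoinRoot.finite_quotient_map_of_isMaximal {A : Type*} [CommRing A] {I : Ideal A}
    [I.IsMaximal] [Finite (A ⧸ I)] {f : A[X]} (hf : f.map (Ideal.Quotient.mk I) ≠ 0) :
    Finite (AdjoinRoot f ⧸ I.map (AdjoinRoot.of f)) := by
  let := Ideal.Quotient.field I
  have : Module.Finite (A ⧸ I) (AdjoinRoot (f.map (Ideal.Quotient.mk I))) :=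
    (AdjoinRoot.powerBasis hf).finite
  have : Finite (AdjoinRoot (f.map (Ideal.Quotient.mk I))) := Module.finite_of_finite (A ⧸ I)
  exact @Finite.of_equiv _ _ this
    (AdjoinRoot.quotAdjoinRootEquivQuotPolynomialQuot I f).symm.toEquiv

theorem Ideal.finite_quotient_span_singleton_mul {A : Type*} [CommRing A] {a b : A}
    [Finite (A ⧸ Ideal.span {a})] [Finite (A ⧸ Ideal.span {b})] :
    Finite (A ⧸ Ideal.span {a * b}) := by
  rw [← Ideal.span_singleton_mul_span_singleton]
  exact Submodule.finite_quotient_smul _ (Submodule.fg_span_singleton b)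

theorem Polynomial.IsPrimitive.map_quotient_span_ne_zero {f : ℤ[X]} (hf : f.IsPrimitive)
    {p : ℤ} (hp : Prime p) : f.map (Ideal.Quotient.mk (Ideal.span {p})) ≠ 0 := by
  intro h
  refine hp.not_isUnit (hf p ((C_dvd_iff_dvd_coeff p f).mpr fun i ↦ ?_))
  rw [← Ideal.mem_span_singleton, ← Ideal.Quotient.eq_zero_iff_mem, ← coeff_map, h,
    coeff_zero]

theorem AdjoinRoot.finite_quotient_span_prime {f : ℤ[X]} (hf : f.IsPrimitive) {p : ℤ}
    (hp : Prime p) : Finite (AdjoinRoot f ⧸ Ideal.span {(p : AdjoinRoot f)}) := by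
  have : (Ideal.span {p}).IsMaximal := PrincipalIdealRing.isMaximal_of_irreducible hp.irreducible
  have : NeZero p := ⟨hp.ne_zero⟩
  have := finite_quotient_map_of_isMaximal (hf.map_quotient_span_ne_zero hp)
  rwa [Ideal.map_span, Set.image_singleton, eq_intCast] at this

theorem AdjoinRoot.finite_quotient_span_intCast {f : ℤ[X]} (hf : f.IsPrimitive) {N : ℤ}
    (hN : N ≠ 0) : Finite (AdjoinRoot f ⧸ Ideal.span {(N : AdjoinRoot f)}) := by
  induction N using UniqueFactorizationMonoid.induction_on_prime with
  | h₁ => exact (hN rfl).elim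
  | h₂ u hu =>
    rw [Ideal.span_singleton_eq_top.mpr (by simpa using hu.map (Int.castRingHom (AdjoinRoot f)))]
    infer_instance
  | h₃ a p ha hp ih =>
    have := finite_quotient_span_prime hf hp
    have := ih ha
    rw [Int.cast_mul]
    exact Ideal.finite_quotient_span_singleton_mul

theorem isOfFinOrder_unitsMap_quotient_of_aeval_eq_zero {S : Type*} [CommRing S] {I : Ideal S}
    {N : ℤ} (hN : N ≠ 0) (hNI : (N : S) ∈ I) {f : ℤ[X]} (hf : f.IsPrimitive) {u : Sˣ}
    (hu : aeval (u : S) f = 0) :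
    IsOfFinOrder (Units.map (Ideal.Quotient.mk I : S →* S ⧸ I) u) := by
  have := AdjoinRoot.finite_quotient_span_intCast hf hN
  let φ : AdjoinRoot f →+* S ⧸ I :=
    (Ideal.Quotient.mk I).comp (AdjoinRoot.lift (Int.castRingHom S) u hu)
  have hφ : Ideal.span {(N : AdjoinRoot f)} ≤ RingHom.ker φ := by
    rw [Ideal.span_singleton_le_iff_mem, RingHom.mem_ker, RingHom.comp_apply, map_intCast,
      Ideal.Quotient.eq_zero_iff_mem]
    exact hNI
  let ψ := Ideal.Quotient.lift _ φ hφ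
  have hψ (k : ℕ) :
      ψ (Ideal.Quotient.mk _ (AdjoinRoot.root f) ^ k) = Ideal.Quotient.mk I u ^ k := by
    rw [map_pow]
    exact congrArg (Ideal.Quotient.mk I · ^ k) (AdjoinRoot.lift_root hu)
  rw [← injective_pow_iff_not_isOfFinOrder.not_left]
  intro hinj
  refine not_injective_infinite_finite
    (fun k : ℕ ↦ Ideal.Quotient.mk (Ideal.span {(N : AdjoinRoot f)}) (AdjoinRoot.root f) ^ k)
    fun i j hij ↦ hinj (Units.ext ?_)
  simpa [hψ] using congrArg ψ hij

theorem Subring.isAlgebraic_int {K : Type*} [Field K] [Algebra ℚ K] [Algebra.IsAlgebraic ℚ K]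
    (R : Subring K) (x : R) : IsAlgebraic ℤ x :=
  (isAlgebraic_algHom_iff R.subtype.toIntAlgHom Subtype.val_injective).mp
    ((IsFractionRing.isAlgebraic_iff ℤ ℚ K).mpr (Algebra.IsAlgebraic.isAlgebraic _))

theorem stmt_2_general (R : Subring (AlgebraicClosure ℚ)) (α : Rˣ)
    (hα : ∀ m : ℕ, 1 ≤ m → α ^ m ≠ 1)
    (n : ℕ) (I : Ideal R) (hI : I ≠ ⊥) :
    {x : Rˣ | (x : R) ^ n - 1 ∈ I}.Infinite := by
  -- instance search picks `DivisionRing.toRatAlgebra` for `Algebra ℚ _` and then misses this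
  have : Algebra.IsAlgebraic ℚ (AlgebraicClosure ℚ) := AlgebraicClosure.isAlgebraic ℚ
  obtain ⟨a, haI, ha0⟩ := Submodule.exists_mem_ne_zero_of_ne_bot hI
  obtain ⟨N, hNI, hN0⟩ := Submodule.exists_mem_ne_zero_of_ne_bot
    (Ideal.comap_ne_bot_of_algebraic_mem ha0 haI (R.isAlgebraic_int a))
  obtain ⟨g, hg0, hg⟩ := R.isAlgebraic_int α
  obtain ⟨d, hd, hαd⟩ := (isOfFinOrder_unitsMap_quotient_of_aeval_eq_zero (u := α) hN0
    (by simpa using Ideal.mem_comap.mp hNI)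
    g.isPrimitive_primPart (aeval_primPart_eq_zero hg0 hg)).exists_pow_eq_one
  have hαd_not_finOrder : ¬IsOfFinOrder (α ^ d) := fun h ↦ by
    obtain ⟨m, hm, hm1⟩ := (h.of_pow hd.ne').exists_pow_eq_one
    exact hα m hm hm1
  refine Set.infinite_of_injective_forall_mem
    (injective_pow_iff_not_isOfFinOrder.mpr hαd_not_finOrder) fun m ↦ ?_
  rw [Set.mem_ofPred_eq, ← Ideal.Quotient.eq]
  have hαd' : Ideal.Quotient.mk I (α : R) ^ d = 1 := by simpa using congrArg Units.val hαd
  simp [hαd']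

/-- Let `R` be a subring of the algebraic numbers containing a unit `α` that is not a
root of unity. Then for every `n ≥ 1` and every nonzero ideal `I` of `R` there are
infinitely many units `x` of `R` with `x^n - 1 ∈ I`. -/
theorem stmt_2 (R : Subring (AlgebraicClosure ℚ)) (α : Rˣ)
    (hα : ∀ m : ℕ, 1 ≤ m → α ^ m ≠ 1)
    (n : ℕ) (hn : 1 ≤ n) (I : Ideal R) (hI : I ≠ ⊥) :
    {x : Rˣ | (x : R) ^ n - 1 ∈ I}.Infinite :=
  stmt_2_general R α hα n I hI
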